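/- arXiv:0806.0320 — 8 statements merged into one kernel-verified Lean document; each statement's English description precedes it below -/
import Mathlib

section
/- (H_λ is contained in the Gauss–Seidel feasible set) If h ∈ H_λ, i.e. h ≤ T_λ h componentwise, then h ∈ H^GS_λ, i.e. h ≤ T^GS_λ h componentwise. Hence H_λ ⊆ H^GS_λ. -/
/-- The Markovian operator `T_λ` of the λ-stochastic shortest path problem:
`(T_λ h)(i) = min_{a ∈ A(i)} ( r(i,a) − λ + Σ_j p(i,a,j)·h(j) )`. -/
noncomputable def Tlam {n : ℕ} (A : Fin n → Finset ℕ) (hA : ∀ i, (A i).Nonempty)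
    (r : Fin n → ℕ → ℝ) (p : Fin n → ℕ → Fin n → ℝ) (lam : ℝ)
    (h : Fin n → ℝ) (i : Fin n) : ℝ :=
  (A i).inf' (hA i) (fun a => r i a - lam + ∑ j, p i a j * h j)
/-- The Gauss–Seidel operator `T^GS_λ`, defined recursively in increasing order of
the state index:
`(T^GS_λ h)(i) = min_{a ∈ A(i)} ( r(i,a) − λ + Σ_{j<i} p(i,a,j)·(T^GS_λ h)(j) + Σ_{j≥i} p(i,a,j)·h(j) )`. -/
noncomputable def TGS {n : ℕ} (A : Fin n → Finset ℕ) (hA : ∀ i, (A i).Nonempty)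
    (r : Fin n → ℕ → ℝ) (p : Fin n → ℕ → Fin n → ℝ) (lam : ℝ)
    (h : Fin n → ℝ) : Fin n → ℝ
  | i =>
    (A i).inf' (hA i) (fun a =>
      r i a - lam
        + ∑ j ∈ (Finset.univ.filter (fun j : Fin n => j < i)).attach,
            p i a j.1 * TGS A hA r p lam h j.1
        + ∑ j ∈ Finset.univ.filter (fun j : Fin n => i ≤ j), p i a j * h j)
  termination_by i => i.1
  decreasing_by
    exact (Finset.mem_filter.mp j.2).2

/-
Gauss–Seidel only replaces the values `h j` of the already visited states `j < i` by the
updated values `(T^GS_λ h)(j)`. Since transition probabilities are nonnegative, the right-hand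
side at `i` is monotone in those values, so by induction along the state order every update
dominates `h`: if `h ≤ T^GS_λ h` on the states `j < i`, then `h i ≤ (T_λ h)(i) ≤ (T^GS_λ h)(i)`.
-/

open Finset

section

variable {n : ℕ} (A : Fin n → Finset ℕ) (hA : ∀ i, (A i).Nonempty)
  (r : Fin n → ℕ → ℝ) (p : Fin n → ℕ → Fin n → ℝ) (lam : ℝ) (h : Fin n → ℝ)

theorem TGS_apply (i : Fin n) :
    TGS A hA r p lam h i = (A i).inf' (hA i) (fun a =>
      r i a - lam + ∑ j ∈ univ.filter (· < i), p i a j * TGS A hA r p lam h j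
        + ∑ j ∈ univ.filter (i ≤ ·), p i a j * h j) := by
  rw [TGS]
  exact inf'_congr _ rfl fun a _ => by
    rw [sum_attach (univ.filter (· < i)) fun j => p i a j * TGS A hA r p lam h j]

theorem Tlam_eq_inf'_sum_lt_add_sum_ge (i : Fin n) :
    Tlam A hA r p lam h i = (A i).inf' (hA i) (fun a =>
      r i a - lam + ∑ j ∈ univ.filter (· < i), p i a j * h j
        + ∑ j ∈ univ.filter (i ≤ ·), p i a j * h j) := by
  simp only [Tlam, add_assoc, ← sum_filter_add_sum_filter_not univ (· < i), not_lt]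

theorem Tlam_le_TGS_of_le_TGS_of_lt {i : Fin n} (hp0 : ∀ a ∈ A i, ∀ j, 0 ≤ p i a j)
    (hlt : ∀ j < i, h j ≤ TGS A hA r p lam h j) :
    Tlam A hA r p lam h i ≤ TGS A hA r p lam h i := by
  rw [Tlam_eq_inf'_sum_lt_add_sum_ge, TGS_apply]
  refine le_inf' _ _ fun a ha => (inf'_le _ ha).trans ?_
  have hvisited : ∑ j ∈ univ.filter (· < i), p i a j * h j
      ≤ ∑ j ∈ univ.filter (· < i), p i a j * TGS A hA r p lam h j :=
    sum_le_sum fun j hj => mul_le_mul_of_nonneg_left (hlt j (mem_filter.mp hj).2) (hp0 a ha j)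
  linarith

end

theorem Hlam_subset_HGS_general (n : ℕ)
    (A : Fin n → Finset ℕ) (hA : ∀ i, (A i).Nonempty)
    (r : Fin n → ℕ → ℝ) (p : Fin n → ℕ → Fin n → ℝ)
    (hp0 : ∀ i, ∀ a ∈ A i, ∀ j, 0 ≤ p i a j)
    (lam : ℝ) (h : Fin n → ℝ) (hh : ∀ i, h i ≤ Tlam A hA r p lam h i) :
    ∀ i, h i ≤ TGS A hA r p lam h i := by
  intro i
  induction i using WellFoundedLT.induction with
  | _ i ih => exact (hh i).trans (Tlam_le_TGS_of_le_TGS_of_lt A hA r p lam h (hp0 i) ih)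

/-- `H_λ` is contained in the Gauss–Seidel feasible set `H^GS_λ`:
if `h ≤ T_λ h` componentwise, then `h ≤ T^GS_λ h` componentwise. -/
theorem Hlam_subset_HGS (n : ℕ) (hn : 1 ≤ n)
    (A : Fin n → Finset ℕ) (hA : ∀ i, (A i).Nonempty)
    (r : Fin n → ℕ → ℝ) (p : Fin n → ℕ → Fin n → ℝ)
    (hp0 : ∀ i, ∀ a ∈ A i, ∀ j, 0 ≤ p i a j)
    (hp1 : ∀ i, ∀ a ∈ A i, ∑ j, p i a j ≤ 1)
    (lam : ℝ) (h : Fin n → ℝ) (hh : ∀ i, h i ≤ Tlam A hA r p lam h i) :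
    ∀ i, h i ≤ TGS A hA r p lam h i :=
  Hlam_subset_HGS_general n A hA r p hp0 lam h hh
end

section
/- (The Gauss–Seidel operator maps its feasible set into H_λ) If h ∈ H^GS_λ, i.e. h ≤ T^GS_λ h componentwise, then the vector g = T^GS_λ h belongs to H_λ, i.e. g ≤ T_λ g componentwise. Hence T^GS_λ(H^GS_λ) ⊆ H_λ. -/
/-!
At state `i` the Gauss–Seidel update is the Markovian update applied to the vector that agrees
with `g = T^GS_λ h` below `i` and with `h` from `i` on. If `h ≤ g`, this vector lies below `g`,
and `T_λ` is monotone because the transition probabilities are nonnegative; hence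
`g i ≤ (T_λ g) i`.
-/

theorem Tlam_mono {n : ℕ} {A : Fin n → Finset ℕ} {hA : ∀ i, (A i).Nonempty}
    {r : Fin n → ℕ → ℝ} {p : Fin n → ℕ → Fin n → ℝ} {lam : ℝ} {g h : Fin n → ℝ} {i : Fin n}
    (hp0 : ∀ a ∈ A i, ∀ j, 0 ≤ p i a j) (hgh : ∀ j, g j ≤ h j) :
    Tlam A hA r p lam g i ≤ Tlam A hA r p lam h i :=
  Finset.inf'_mono_fun fun a ha => by
    gcongr with j
    exacts [hp0 a ha j, hgh j]

theorem TGS_eq_Tlam_ite {n : ℕ} (A : Fin n → Finset ℕ) (hA : ∀ i, (A i).Nonempty)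
    (r : Fin n → ℕ → ℝ) (p : Fin n → ℕ → Fin n → ℝ) (lam : ℝ) (h : Fin n → ℝ) (i : Fin n) :
    TGS A hA r p lam h i =
      Tlam A hA r p lam (fun j => if j < i then TGS A hA r p lam h j else h j) i := by
  rw [TGS, Tlam]
  simp only [mul_ite, Finset.sum_ite, not_lt, add_assoc]
  congr! with a
  exact Finset.sum_attach _ fun j => p i a j * TGS A hA r p lam h j

theorem TGS_maps_HGS_into_Hlam_general (n : ℕ)
    (A : Fin n → Finset ℕ) (hA : ∀ i, (A i).Nonempty)
    (r : Fin n → ℕ → ℝ) (p : Fin n → ℕ → Fin n → ℝ)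
    (hp0 : ∀ i, ∀ a ∈ A i, ∀ j, 0 ≤ p i a j)
    (lam : ℝ) (h : Fin n → ℝ) (hh : ∀ i, h i ≤ TGS A hA r p lam h i) :
    ∀ i, TGS A hA r p lam h i ≤ Tlam A hA r p lam (TGS A hA r p lam h) i := by
  intro i
  rw [TGS_eq_Tlam_ite]
  refine Tlam_mono (hp0 i) fun j => ?_
  split_ifs
  exacts [le_rfl, hh j]

/-- The Gauss–Seidel operator maps its feasible set into `H_λ`:
if `h ≤ T^GS_λ h` componentwise, then `g = T^GS_λ h` satisfies `g ≤ T_λ g`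
componentwise. -/
theorem TGS_maps_HGS_into_Hlam (n : ℕ) (hn : 1 ≤ n)
    (A : Fin n → Finset ℕ) (hA : ∀ i, (A i).Nonempty)
    (r : Fin n → ℕ → ℝ) (p : Fin n → ℕ → Fin n → ℝ)
    (hp0 : ∀ i, ∀ a ∈ A i, ∀ j, 0 ≤ p i a j)
    (hp1 : ∀ i, ∀ a ∈ A i, ∑ j, p i a j ≤ 1)
    (lam : ℝ) (h : Fin n → ℝ) (hh : ∀ i, h i ≤ TGS A hA r p lam h i) :
    ∀ i, TGS A hA r p lam h i ≤ Tlam A hA r p lam (TGS A hA r p lam h) i :=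
  TGS_maps_HGS_into_Hlam_general n A hA r p hp0 lam h hh
end

section
/- (Invariance of the Gauss–Seidel feasible set under the Gauss–Seidel operator) If h ∈ H^GS_λ, i.e. h ≤ T^GS_λ h componentwise, then T^GS_λ h ∈ H^GS_λ, i.e. T^GS_λ h ≤ T^GS_λ(T^GS_λ h) componentwise. Hence T^GS_λ(H^GS_λ) ⊆ H^GS_λ. -/
theorem TGS_mono {n : ℕ} {A : Fin n → Finset ℕ} {hA : ∀ i, (A i).Nonempty}
    {r : Fin n → ℕ → ℝ} {p : Fin n → ℕ → Fin n → ℝ} (hp0 : ∀ i, ∀ a ∈ A i, ∀ j, 0 ≤ p i a j)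
    (lam : ℝ) : Monotone (TGS A hA r p lam) := by
  intro h g hhg i
  induction i using WellFoundedLT.induction with
  | ind i ih =>
    rw [TGS, TGS]
    refine Finset.inf'_mono_fun fun a ha => add_le_add (add_le_add le_rfl ?_) ?_
    · exact Finset.sum_le_sum fun j _ => mul_le_mul_of_nonneg_left
        (ih j.1 (Finset.mem_filter.mp j.2).2) (hp0 i a ha j.1)
    · exact Finset.sum_le_sum fun j _ => mul_le_mul_of_nonneg_left (hhg j) (hp0 i a ha j)

theorem HGS_invariant_under_TGS_general (n : ℕ)
    (A : Fin n → Finset ℕ) (hA : ∀ i, (A i).Nonempty)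
    (r : Fin n → ℕ → ℝ) (p : Fin n → ℕ → Fin n → ℝ)
    (hp0 : ∀ i, ∀ a ∈ A i, ∀ j, 0 ≤ p i a j)
    (lam : ℝ) (h : Fin n → ℝ) (hh : ∀ i, h i ≤ TGS A hA r p lam h i) :
    ∀ i, TGS A hA r p lam h i ≤ TGS A hA r p lam (TGS A hA r p lam h) i :=
  TGS_mono hp0 lam hh

/-- Invariance of the Gauss–Seidel feasible set `H^GS_λ` under `T^GS_λ`:
if `h ≤ T^GS_λ h` componentwise, then `T^GS_λ h ≤ T^GS_λ (T^GS_λ h)`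
componentwise. -/
theorem HGS_invariant_under_TGS (n : ℕ) (hn : 1 ≤ n)
    (A : Fin n → Finset ℕ) (hA : ∀ i, (A i).Nonempty)
    (r : Fin n → ℕ → ℝ) (p : Fin n → ℕ → Fin n → ℝ)
    (hp0 : ∀ i, ∀ a ∈ A i, ∀ j, 0 ≤ p i a j)
    (hp1 : ∀ i, ∀ a ∈ A i, ∑ j, p i a j ≤ 1)
    (lam : ℝ) (h : Fin n → ℝ) (hh : ∀ i, h i ≤ TGS A hA r p lam h i) :
    ∀ i, TGS A hA r p lam h i ≤ TGS A hA r p lam (TGS A hA r p lam h) i :=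
  HGS_invariant_under_TGS_general n A hA r p hp0 lam h hh
end

section
/- (Projective Operator satisfies Acceleration Conditions (A) and (B)) Suppose there exists at least one pair (i, a) with a ∈ A(i) and Σ_j p(i,a,j) < 1. Let h ∈ H_λ and define α* = min over all pairs (i, a) with a ∈ A(i) and Σ_j p(i,a,j) < 1 of ( r(i,a) − λ − h(i) + Σ_j p(i,a,j)·h(j) ) / ( 1 − Σ_j p(i,a,j) ). Then α* ≥ 0, the vector h + α*·e (where e = (1,…,1)) belongs to H_λ, and h + α*·e ≥ h componentwise. -/
open scoped Classical

set_option maxHeartbeats 1000000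

open Finset

lemma le_add_mul_of_le_div_one_sub {s q α : ℝ} (hs : 0 ≤ s) (hα : 0 ≤ α)
    (hq : q < 1 → α ≤ s / (1 - q)) : α ≤ s + q * α := by
  by_cases hq1 : q < 1
  · have := (le_div_iff₀ (sub_pos.mpr hq1)).mp (hq hq1)
    linarith
  · nlinarith

lemma sum_mul_add_const {ι : Type*} [Fintype ι] (p g : ι → ℝ) (c : ℝ) :
    ∑ j, p j * (g j + c) = ∑ j, p j * g j + (∑ j, p j) * c := by
  simp only [mul_add, sum_add_distrib, sum_mul]

section Projective

variable {n : ℕ} (A : Fin n → Finset ℕ) (hA : ∀ i, (A i).Nonempty)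
  (r : Fin n → ℕ → ℝ) (p : Fin n → ℕ → Fin n → ℝ) (lam : ℝ)

lemma le_Tlam_iff {g : Fin n → ℝ} {i : Fin n} {c : ℝ} :
    c ≤ Tlam A hA r p lam g i ↔ ∀ a ∈ A i, c ≤ r i a - lam + ∑ j, p i a j * g j :=
  le_inf'_iff _ _

noncomputable def leakyPairs : Finset (Σ _ : Fin n, ℕ) :=
  ((univ : Finset (Fin n)).sigma A).filter (fun x => ∑ j, p x.1 x.2 j < 1)

/-- The shift `α*` of the projective operator. -/
noncomputable def projectiveStep (h : Fin n → ℝ) (hne : (leakyPairs A p).Nonempty) : ℝ :=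
  (leakyPairs A p).inf' hne
    (fun x => (r x.1 x.2 - lam - h x.1 + ∑ j, p x.1 x.2 j * h j) / (1 - ∑ j, p x.1 x.2 j))

variable {A hA r p lam} {h : Fin n → ℝ}

lemma mem_leakyPairs {i : Fin n} {a : ℕ} :
    ⟨i, a⟩ ∈ leakyPairs A p ↔ a ∈ A i ∧ ∑ j, p i a j < 1 := by
  simp [leakyPairs]

lemma slack_nonneg (hh : ∀ i, h i ≤ Tlam A hA r p lam h i) {i : Fin n} {a : ℕ} (ha : a ∈ A i) :
    0 ≤ r i a - lam - h i + ∑ j, p i a j * h j := by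
  linarith [(le_Tlam_iff A hA r p lam).mp (hh i) a ha]

lemma projectiveStep_nonneg (hh : ∀ i, h i ≤ Tlam A hA r p lam h i)
    (hne : (leakyPairs A p).Nonempty) : 0 ≤ projectiveStep A r p lam h hne := by
  refine le_inf' _ _ fun ⟨i, a⟩ hx => ?_
  obtain ⟨ha, hlt⟩ := mem_leakyPairs.mp hx
  exact div_nonneg (slack_nonneg hh ha) (sub_nonneg.mpr hlt.le)

lemma le_Tlam_add_const (hh : ∀ i, h i ≤ Tlam A hA r p lam h i)
    (hne : (leakyPairs A p).Nonempty) {α : ℝ} (hα0 : 0 ≤ α)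
    (hα : α ≤ projectiveStep A r p lam h hne) (i : Fin n) :
    h i + α ≤ Tlam A hA r p lam (fun j => h j + α) i := by
  refine (le_Tlam_iff A hA r p lam).mpr fun a ha => ?_
  have hstep : α ≤ r i a - lam - h i + ∑ j, p i a j * h j + (∑ j, p i a j) * α :=
    le_add_mul_of_le_div_one_sub (slack_nonneg hh ha) hα0 fun hlt =>
      hα.trans (inf'_le _ (mem_leakyPairs.mpr ⟨ha, hlt⟩))
  rw [sum_mul_add_const]
  linarith

end Projective

theorem projective_operator_acceleration_general (n : ℕ)
    (A : Fin n → Finset ℕ) (hA : ∀ i, (A i).Nonempty)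
    (r : Fin n → ℕ → ℝ) (p : Fin n → ℕ → Fin n → ℝ)
    (lam : ℝ) (h : Fin n → ℝ) (hh : ∀ i, h i ≤ Tlam A hA r p lam h i)
    (hne : (((Finset.univ : Finset (Fin n)).sigma A).filter
        (fun x => ∑ j, p x.1 x.2 j < 1)).Nonempty)
    (αstar : ℝ)
    (hαstar : αstar = (((Finset.univ : Finset (Fin n)).sigma A).filter
        (fun x => ∑ j, p x.1 x.2 j < 1)).inf' hne
        (fun x => (r x.1 x.2 - lam - h x.1 + ∑ j, p x.1 x.2 j * h j)
          / (1 - ∑ j, p x.1 x.2 j))) :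
    0 ≤ αstar ∧
      (∀ i, h i + αstar ≤ Tlam A hA r p lam (fun j => h j + αstar) i) ∧
      (∀ i, h i + αstar ≥ h i) := by
  have hα0 : 0 ≤ αstar := hαstar ▸ projectiveStep_nonneg hh hne
  exact ⟨hα0, le_Tlam_add_const hh hne hα0 hαstar.le, fun i => le_add_of_nonneg_right hα0⟩

/-- The Projective Operator satisfies Acceleration Conditions (A) and (B).
Suppose there is at least one pair `(i, a)` with `a ∈ A i` and `Σ_j p(i,a,j) < 1`,
and let `α*` be the minimum over all such pairs of
`(r(i,a) − λ − h(i) + Σ_j p(i,a,j)·h(j)) / (1 − Σ_j p(i,a,j))`.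
Then for `h ∈ H_λ` we have `α* ≥ 0`, `h + α*·e ∈ H_λ`, and `h + α*·e ≥ h`. -/
theorem projective_operator_acceleration (n : ℕ) (hn : 1 ≤ n)
    (A : Fin n → Finset ℕ) (hA : ∀ i, (A i).Nonempty)
    (r : Fin n → ℕ → ℝ) (p : Fin n → ℕ → Fin n → ℝ)
    (hp0 : ∀ i, ∀ a ∈ A i, ∀ j, 0 ≤ p i a j)
    (hp1 : ∀ i, ∀ a ∈ A i, ∑ j, p i a j ≤ 1)
    (lam : ℝ) (h : Fin n → ℝ) (hh : ∀ i, h i ≤ Tlam A hA r p lam h i)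
    (hne : (((Finset.univ : Finset (Fin n)).sigma A).filter
        (fun x => ∑ j, p x.1 x.2 j < 1)).Nonempty)
    (αstar : ℝ)
    (hαstar : αstar = (((Finset.univ : Finset (Fin n)).sigma A).filter
        (fun x => ∑ j, p x.1 x.2 j < 1)).inf' hne
        (fun x => (r x.1 x.2 - lam - h x.1 + ∑ j, p x.1 x.2 j * h j)
          / (1 - ∑ j, p x.1 x.2 j))) :
    0 ≤ αstar ∧
      (∀ i, h i + αstar ≤ Tlam A hA r p lam (fun j => h j + αstar) i) ∧
      (∀ i, h i + αstar ≥ h i) :=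
  projective_operator_acceleration_general n A hA r p lam h hh hne αstar hαstar
end

section
/- (Elements of V are dominated by the fixed point) Suppose v* ∈ ℝ^n satisfies T v* = v*. Then every v ∈ V, i.e. every v with v ≤ T v componentwise, satisfies v ≤ v* componentwise. -/
/-!
If `M = max_j (v j - v* j)` is attained at `i₀`, choose the action attaining `(T v*)(i₀)`; using
it for `v` gives `M ≤ v i₀ - (T v*)(i₀) ≤ (T v)(i₀) - (T v*)(i₀) ≤ α M`, because a stochastic row
averages `v - v*` to at most `M`. As `α < 1`, this forces `M ≤ 0`.
-/

/-- The Markovian operator of the discounted MDP: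
`(T v)(i) = min_{a ∈ A(i)} ( r(i,a) + α·Σ_j p(i,a,j)·v(j) )`. -/
noncomputable def Tdisc {n : ℕ} (A : Fin n → Finset ℕ) (hA : ∀ i, (A i).Nonempty)
    (r : Fin n → ℕ → ℝ) (p : Fin n → ℕ → Fin n → ℝ) (disc : ℝ)
    (v : Fin n → ℝ) (i : Fin n) : ℝ :=
  (A i).inf' (hA i) (fun a => r i a + disc * ∑ j, p i a j * v j)

theorem Finset.sum_mul_le_of_forall_le {ι : Type*} [Fintype ι] {p x : ι → ℝ} {M : ℝ}
    (hp0 : ∀ j, 0 ≤ p j) (hp1 : ∑ j, p j = 1) (hx : ∀ j, x j ≤ M) :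
    ∑ j, p j * x j ≤ M :=
  calc ∑ j, p j * x j ≤ ∑ j, p j * M :=
        Finset.sum_le_sum fun j _ => mul_le_mul_of_nonneg_left (hx j) (hp0 j)
    _ = M := by rw [← Finset.sum_mul, hp1, one_mul]

theorem Tdisc_le_add_of_sub_le {n : ℕ} {A : Fin n → Finset ℕ} {hA : ∀ i, (A i).Nonempty}
    {r : Fin n → ℕ → ℝ} {p : Fin n → ℕ → Fin n → ℝ} {disc : ℝ} (hdisc0 : 0 ≤ disc)
    (hp0 : ∀ i, ∀ a ∈ A i, ∀ j, 0 ≤ p i a j) (hp1 : ∀ i, ∀ a ∈ A i, ∑ j, p i a j = 1)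
    {v w : Fin n → ℝ} {M : ℝ} (hvw : ∀ j, v j - w j ≤ M) (i : Fin n) :
    Tdisc A hA r p disc v i ≤ Tdisc A hA r p disc w i + disc * M := by
  obtain ⟨a, ha, hw⟩ :=
    Finset.exists_mem_eq_inf' (hA i) fun a => r i a + disc * ∑ j, p i a j * w j
  have hsplit : ∑ j, p i a j * v j = ∑ j, p i a j * w j + ∑ j, p i a j * (v j - w j) := by
    simp only [mul_sub, Finset.sum_sub_distrib, add_sub_cancel]
  calc Tdisc A hA r p disc v i ≤ r i a + disc * ∑ j, p i a j * v j :=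
        Finset.inf'_le _ ha
    _ = r i a + disc * ∑ j, p i a j * w j + disc * ∑ j, p i a j * (v j - w j) := by
        rw [hsplit]; ring
    _ ≤ r i a + disc * ∑ j, p i a j * w j + disc * M := by
        gcongr
        exact Finset.sum_mul_le_of_forall_le (hp0 i a ha) (hp1 i a ha) hvw
    _ = Tdisc A hA r p disc w i + disc * M := by rw [Tdisc, hw]

theorem feasible_le_fixedPoint_general (n : ℕ)
    (disc : ℝ) (hdisc0 : 0 ≤ disc) (hdisc1 : disc < 1)
    (A : Fin n → Finset ℕ) (hA : ∀ i, (A i).Nonempty)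
    (r : Fin n → ℕ → ℝ) (p : Fin n → ℕ → Fin n → ℝ)
    (hp0 : ∀ i, ∀ a ∈ A i, ∀ j, 0 ≤ p i a j)
    (hp1 : ∀ i, ∀ a ∈ A i, ∑ j, p i a j = 1)
    (vstar : Fin n → ℝ) (hfix : Tdisc A hA r p disc vstar = vstar)
    (v : Fin n → ℝ) (hv : ∀ i, v i ≤ Tdisc A hA r p disc v i) :
    ∀ i, v i ≤ vstar i := by
  intro i
  have : Nonempty (Fin n) := ⟨i⟩
  obtain ⟨i₀, hmax⟩ := Finite.exists_max fun j => v j - vstar j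
  have hstep := Tdisc_le_add_of_sub_le (hA := hA) (r := r) hdisc0 hp0 hp1 hmax i₀
  rw [hfix] at hstep
  have hM : v i₀ - vstar i₀ ≤ 0 := by nlinarith [hv i₀]
  linarith [hmax i]

/-- Elements of `V = {v : v ≤ T v}` are dominated by the fixed point of the
discounted operator `T`: if `T v* = v*` and `v ≤ T v` componentwise, then
`v ≤ v*` componentwise. -/
theorem feasible_le_fixedPoint (n : ℕ) (hn : 1 ≤ n)
    (disc : ℝ) (hdisc0 : 0 ≤ disc) (hdisc1 : disc < 1)
    (A : Fin n → Finset ℕ) (hA : ∀ i, (A i).Nonempty)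
    (r : Fin n → ℕ → ℝ) (p : Fin n → ℕ → Fin n → ℝ)
    (hp0 : ∀ i, ∀ a ∈ A i, ∀ j, 0 ≤ p i a j)
    (hp1 : ∀ i, ∀ a ∈ A i, ∑ j, p i a j = 1)
    (vstar : Fin n → ℝ) (hfix : Tdisc A hA r p disc vstar = vstar)
    (v : Fin n → ℝ) (hv : ∀ i, v i ≤ Tdisc A hA r p disc v i) :
    ∀ i, v i ≤ vstar i :=
  feasible_le_fixedPoint_general n disc hdisc0 hdisc1 A hA r p hp0 hp1 vstar hfix v hv
end

section
/- (Sandwich property of accelerated value iteration, Remark (i)) Let Z : ℝ^n → ℝ^n satisfy (A) Z(V) ⊆ V and (B) Z v ≥ v componentwise for all v ∈ V. Suppose v* ∈ ℝ^n satisfies T v* = v*. Let v^0 = w^0 ∈ V and define v^{k+1} = T v^k and w^{k+1} = Z(T w^k) for k ≥ 0. Then for every k ≥ 0: v^k ≤ w^k ≤ v* componentwise. -/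
/-!
Two facts carry the argument. First, `T` is monotone, so `T` maps the set `V` of subsolutions
`v ≤ T v` into itself, and an induction keeps both `v^k ≤ w^k` and `w^k ∈ V`. Second, every
subsolution lies below the fixed point `v*`: if `c` is the largest entry of `u - v*`, then
`u ≤ v* + c` gives `u ≤ T u ≤ T v* + α c = v* + α c` at the maximising state, so `c ≤ α c` and
`c ≤ 0`.
-/

theorem Monotone.le_accelerated_iterate {α : Type*} [Preorder α] {T Z : α → α}
    (hT : Monotone T) (hZA : ∀ x, x ≤ T x → Z x ≤ T (Z x)) (hZB : ∀ x, x ≤ T x → x ≤ Z x)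
    {v w : ℕ → α} (h0 : v 0 = w 0) (h0V : v 0 ≤ T (v 0))
    (hv : ∀ k, v (k + 1) = T (v k)) (hw : ∀ k, w (k + 1) = Z (T (w k))) :
    ∀ k, v k ≤ w k ∧ w k ≤ T (w k) := by
  intro k
  induction k with
  | zero => exact ⟨h0.le, h0 ▸ h0V⟩
  | succ k ih =>
    obtain ⟨hvw, hwV⟩ := ih
    have hTwV : T (w k) ≤ T (T (w k)) := hT hwV
    rw [hv, hw]
    exact ⟨(hT hvw).trans (hZB _ hTwV), hZA _ hTwV⟩

section Tdisc

variable {n : ℕ} {A : Fin n → Finset ℕ} {hA : ∀ i, (A i).Nonempty}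
  {r : Fin n → ℕ → ℝ} {p : Fin n → ℕ → Fin n → ℝ} {disc : ℝ}

theorem Tdisc_le_add_of_le_add (hdisc0 : 0 ≤ disc) (hp0 : ∀ i, ∀ a ∈ A i, ∀ j, 0 ≤ p i a j)
    (hp1 : ∀ i, ∀ a ∈ A i, ∑ j, p i a j = 1) {u v : Fin n → ℝ} {c : ℝ}
    (huv : ∀ j, u j ≤ v j + c) (i : Fin n) :
    Tdisc A hA r p disc u i ≤ Tdisc A hA r p disc v i + disc * c := by
  rw [← sub_le_iff_le_add]
  refine Finset.le_inf' _ _ fun a ha => ?_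
  have hsum : ∑ j, p i a j * u j ≤ ∑ j, p i a j * v j + c :=
    calc ∑ j, p i a j * u j ≤ ∑ j, p i a j * (v j + c) :=
          Finset.sum_le_sum fun j _ => mul_le_mul_of_nonneg_left (huv j) (hp0 i a ha j)
      _ = ∑ j, p i a j * v j + c := by
          simp only [mul_add, Finset.sum_add_distrib, ← Finset.sum_mul, hp1 i a ha, one_mul]
  have hTu : Tdisc A hA r p disc u i ≤ r i a + disc * ∑ j, p i a j * u j :=
    Finset.inf'_le _ ha
  linarith [mul_le_mul_of_nonneg_left hsum hdisc0]

theorem Tdisc_monotone (hdisc0 : 0 ≤ disc) (hp0 : ∀ i, ∀ a ∈ A i, ∀ j, 0 ≤ p i a j) :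
    Monotone (Tdisc A hA r p disc) := by
  intro u v huv i
  refine Finset.le_inf' _ _ fun a ha => (Finset.inf'_le _ ha).trans ?_
  gcongr with j
  · exact hp0 i a ha j
  · exact huv j

theorem le_of_le_Tdisc_of_Tdisc_eq (hdisc0 : 0 ≤ disc) (hdisc1 : disc < 1)
    (hp0 : ∀ i, ∀ a ∈ A i, ∀ j, 0 ≤ p i a j) (hp1 : ∀ i, ∀ a ∈ A i, ∑ j, p i a j = 1)
    {u vstar : Fin n → ℝ} (hu : u ≤ Tdisc A hA r p disc u)
    (hfix : Tdisc A hA r p disc vstar = vstar) : u ≤ vstar := by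
  intro i
  have : Nonempty (Fin n) := ⟨i⟩
  obtain ⟨i₀, hi₀⟩ := Finite.exists_max fun j => u j - vstar j
  set c := u i₀ - vstar i₀
  have hle : ∀ j, u j ≤ vstar j + c := fun j => by linarith [hi₀ j]
  have hc : c ≤ disc * c := by
    have := Tdisc_le_add_of_le_add (hA := hA) (r := r) hdisc0 hp0 hp1 hle i₀
    rw [hfix] at this
    linarith [hu i₀]
  have hc0 : c ≤ 0 := by nlinarith
  linarith [hle i]

end Tdisc

theorem accelerated_VI_sandwich_general (n : ℕ)
    (disc : ℝ) (hdisc0 : 0 ≤ disc) (hdisc1 : disc < 1)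
    (A : Fin n → Finset ℕ) (hA : ∀ i, (A i).Nonempty)
    (r : Fin n → ℕ → ℝ) (p : Fin n → ℕ → Fin n → ℝ)
    (hp0 : ∀ i, ∀ a ∈ A i, ∀ j, 0 ≤ p i a j)
    (hp1 : ∀ i, ∀ a ∈ A i, ∑ j, p i a j = 1)
    (Z : (Fin n → ℝ) → (Fin n → ℝ))
    (hZA : ∀ v : Fin n → ℝ, (∀ i, v i ≤ Tdisc A hA r p disc v i) →
      ∀ i, Z v i ≤ Tdisc A hA r p disc (Z v) i)
    (hZB : ∀ v : Fin n → ℝ, (∀ i, v i ≤ Tdisc A hA r p disc v i) →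
      ∀ i, v i ≤ Z v i)
    (vstar : Fin n → ℝ) (hfix : Tdisc A hA r p disc vstar = vstar)
    (v w : ℕ → Fin n → ℝ)
    (h0 : v 0 = w 0) (h0V : ∀ i, v 0 i ≤ Tdisc A hA r p disc (v 0) i)
    (hv : ∀ k, v (k + 1) = Tdisc A hA r p disc (v k))
    (hw : ∀ k, w (k + 1) = Z (Tdisc A hA r p disc (w k))) :
    ∀ k, ∀ i, v k i ≤ w k i ∧ w k i ≤ vstar i := by
  intro k i
  obtain ⟨hvw, hwV⟩ :=
    (Tdisc_monotone hdisc0 hp0).le_accelerated_iterate hZA hZB h0 h0V hv hw k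
  exact ⟨hvw i, le_of_le_Tdisc_of_Tdisc_eq hdisc0 hdisc1 hp0 hp1 hwV hfix i⟩

/-- Sandwich property of accelerated value iteration (Remark, part (i)):
if `Z` satisfies the Acceleration Conditions (A) `Z(V) ⊆ V` and (B) `Z v ≥ v` on
`V = {v : v ≤ T v}`, `T v* = v*`, `v⁰ = w⁰ ∈ V`, `v^{k+1} = T v^k` and
`w^{k+1} = Z (T w^k)`, then `v^k ≤ w^k ≤ v*` componentwise for every `k`. -/
theorem accelerated_VI_sandwich (n : ℕ) (hn : 1 ≤ n)
    (disc : ℝ) (hdisc0 : 0 ≤ disc) (hdisc1 : disc < 1)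
    (A : Fin n → Finset ℕ) (hA : ∀ i, (A i).Nonempty)
    (r : Fin n → ℕ → ℝ) (p : Fin n → ℕ → Fin n → ℝ)
    (hp0 : ∀ i, ∀ a ∈ A i, ∀ j, 0 ≤ p i a j)
    (hp1 : ∀ i, ∀ a ∈ A i, ∑ j, p i a j = 1)
    (Z : (Fin n → ℝ) → (Fin n → ℝ))
    (hZA : ∀ v : Fin n → ℝ, (∀ i, v i ≤ Tdisc A hA r p disc v i) →
      ∀ i, Z v i ≤ Tdisc A hA r p disc (Z v) i)
    (hZB : ∀ v : Fin n → ℝ, (∀ i, v i ≤ Tdisc A hA r p disc v i) →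
      ∀ i, v i ≤ Z v i)
    (vstar : Fin n → ℝ) (hfix : Tdisc A hA r p disc vstar = vstar)
    (v w : ℕ → Fin n → ℝ)
    (h0 : v 0 = w 0) (h0V : ∀ i, v 0 i ≤ Tdisc A hA r p disc (v 0) i)
    (hv : ∀ k, v (k + 1) = Tdisc A hA r p disc (v k))
    (hw : ∀ k, w (k + 1) = Z (Tdisc A hA r p disc (w k))) :
    ∀ k, ∀ i, v k i ≤ w k i ∧ w k i ≤ vstar i :=
  accelerated_VI_sandwich_general n disc hdisc0 hdisc1 A hA r p hp0 hp1 Z hZA hZB vstar hfix v w h0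
    h0V hv hw
end

section
/- (Geometric rate of convergence of the accelerated iterates, Remark (iv)) Let Z : ℝ^n → ℝ^n satisfy (A) Z(V) ⊆ V and (B) Z v ≥ v componentwise for all v ∈ V. Suppose v* ∈ ℝ^n satisfies T v* = v*. Let v^0 = w^0 ∈ V and define v^{k+1} = T v^k and w^{k+1} = Z(T w^k) for k ≥ 0. Then for every k ≥ 0: ‖v* − w^k‖_∞ ≤ α^k · ‖v* − v^0‖_∞, where ‖·‖_∞ denotes the max norm on ℝ^n; in particular w^k converges to v*. -/
def IsDiscountedMonotone {ι : Type*} (disc : ℝ) (T : (ι → ℝ) → ι → ℝ) : Prop :=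
  ∀ (u v : ι → ℝ) (c : ℝ), (∀ j, u j ≤ v j + c) → ∀ i, T u i ≤ T v i + disc * c

lemma Tdisc_isDiscountedMonotone {n : ℕ} {A : Fin n → Finset ℕ} {hA : ∀ i, (A i).Nonempty}
    {r : Fin n → ℕ → ℝ} {p : Fin n → ℕ → Fin n → ℝ} {disc : ℝ} (hdisc : 0 ≤ disc)
    (hp0 : ∀ i, ∀ a ∈ A i, ∀ j, 0 ≤ p i a j) (hp1 : ∀ i, ∀ a ∈ A i, ∑ j, p i a j = 1) :
    IsDiscountedMonotone disc (Tdisc A hA r p disc) := by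
  intro u v c huv i
  obtain ⟨a, ha, hav⟩ :=
    Finset.exists_mem_eq_inf' (hA i) (fun a => r i a + disc * ∑ j, p i a j * v j)
  have hsum : ∑ j, p i a j * u j ≤ ∑ j, p i a j * v j + c := calc
    ∑ j, p i a j * u j ≤ ∑ j, p i a j * (v j + c) :=
      Finset.sum_le_sum fun j _ => mul_le_mul_of_nonneg_left (huv j) (hp0 i a ha j)
    _ = ∑ j, p i a j * v j + c := by
      simp only [mul_add, Finset.sum_add_distrib, ← Finset.sum_mul, hp1 i a ha, one_mul]
  calc Tdisc A hA r p disc u i ≤ r i a + disc * ∑ j, p i a j * u j := Finset.inf'_le _ ha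
    _ ≤ r i a + disc * (∑ j, p i a j * v j + c) := by gcongr
    _ = Tdisc A hA r p disc v i + disc * c := by rw [Tdisc, hav]; ring

lemma le_add_norm_sub {ι : Type*} [Fintype ι] (u v : ι → ℝ) (j : ι) : u j ≤ v j + ‖u - v‖ := by
  have := (le_abs_self _).trans (norm_le_pi_norm (u - v) j)
  rw [Pi.sub_apply] at this
  linarith

namespace IsDiscountedMonotone

variable {ι : Type*} {disc : ℝ} {T : (ι → ℝ) → ι → ℝ}

lemma monotone (hT : IsDiscountedMonotone disc T) : Monotone T := fun u v huv i => by
  simpa using hT u v 0 (fun j => by simpa using huv j) i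

lemma orbit_le_add_pow (hT : IsDiscountedMonotone disc T) {x y : ℕ → ι → ℝ}
    (hx : ∀ k, x (k + 1) = T (x k)) (hy : ∀ k, y (k + 1) = T (y k)) {C : ℝ}
    (h0 : ∀ j, x 0 j ≤ y 0 j + C) (k : ℕ) (j : ι) : x k j ≤ y k j + disc ^ k * C := by
  induction k generalizing j with
  | zero => simpa using h0 j
  | succ k ih =>
    rw [hx, hy, pow_succ', mul_assoc]
    exact hT _ _ _ ih j

lemma le_fixedPoint_of_le_apply [Fintype ι] (hT : IsDiscountedMonotone disc T) (hdisc0 : 0 ≤ disc)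
    (hdisc1 : disc < 1) {vstar : ι → ℝ} (hfix : T vstar = vstar) {u : ι → ℝ} (hu : u ≤ T u) :
    u ≤ vstar := by
  have hbound : ∀ k j, u j ≤ vstar j + disc ^ k * ‖u - vstar‖ := by
    intro k
    induction k with
    | zero => simpa using le_add_norm_sub u vstar
    | succ k ih =>
      intro j
      calc u j ≤ T u j := hu j
        _ ≤ T vstar j + disc * (disc ^ k * ‖u - vstar‖) := hT _ _ _ ih j
        _ = vstar j + disc ^ (k + 1) * ‖u - vstar‖ := by rw [hfix]; ring
  intro j
  have hlim := ((tendsto_pow_atTop_nhds_zero_of_lt_one hdisc0 hdisc1).mul_const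
    ‖u - vstar‖).const_add (vstar j)
  rw [zero_mul, add_zero] at hlim
  exact ge_of_tendsto' hlim (hbound · j)

lemma accelerated_mem_and_le (hT : IsDiscountedMonotone disc T) {Z : (ι → ℝ) → ι → ℝ}
    (hZA : ∀ v, v ≤ T v → Z v ≤ T (Z v)) (hZB : ∀ v, v ≤ T v → v ≤ Z v)
    {v w : ℕ → ι → ℝ} (h0 : v 0 = w 0) (h0V : v 0 ≤ T (v 0))
    (hv : ∀ k, v (k + 1) = T (v k)) (hw : ∀ k, w (k + 1) = Z (T (w k))) (k : ℕ) :
    w k ≤ T (w k) ∧ v k ≤ w k := by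
  induction k with
  | zero => exact ⟨h0 ▸ h0V, h0.le⟩
  | succ k ih =>
    have hTw : T (w k) ≤ T (T (w k)) := hT.monotone ih.1
    rw [hv, hw]
    exact ⟨hZA _ hTw, (hT.monotone ih.2).trans (hZB _ hTw)⟩

end IsDiscountedMonotone

theorem accelerated_VI_geometric_rate_general (n : ℕ)
    (disc : ℝ) (hdisc0 : 0 ≤ disc) (hdisc1 : disc < 1)
    (A : Fin n → Finset ℕ) (hA : ∀ i, (A i).Nonempty)
    (r : Fin n → ℕ → ℝ) (p : Fin n → ℕ → Fin n → ℝ)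
    (hp0 : ∀ i, ∀ a ∈ A i, ∀ j, 0 ≤ p i a j)
    (hp1 : ∀ i, ∀ a ∈ A i, ∑ j, p i a j = 1)
    (Z : (Fin n → ℝ) → (Fin n → ℝ))
    (hZA : ∀ v : Fin n → ℝ, (∀ i, v i ≤ Tdisc A hA r p disc v i) →
      ∀ i, Z v i ≤ Tdisc A hA r p disc (Z v) i)
    (hZB : ∀ v : Fin n → ℝ, (∀ i, v i ≤ Tdisc A hA r p disc v i) →
      ∀ i, v i ≤ Z v i)
    (vstar : Fin n → ℝ) (hfix : Tdisc A hA r p disc vstar = vstar)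
    (v w : ℕ → Fin n → ℝ)
    (h0 : v 0 = w 0) (h0V : ∀ i, v 0 i ≤ Tdisc A hA r p disc (v 0) i)
    (hv : ∀ k, v (k + 1) = Tdisc A hA r p disc (v k))
    (hw : ∀ k, w (k + 1) = Z (Tdisc A hA r p disc (w k))) :
    (∀ k, ‖vstar - w k‖ ≤ disc ^ k * ‖vstar - v 0‖) ∧
      Filter.Tendsto w Filter.atTop (nhds vstar) := by
  have hT := Tdisc_isDiscountedMonotone (r := r) (hA := hA) hdisc0 hp0 hp1
  have hvw k := hT.accelerated_mem_and_le hZA hZB h0 h0V hv hw k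
  have hrate k : ‖vstar - w k‖ ≤ disc ^ k * ‖vstar - v 0‖ := by
    have hv_lb := hT.orbit_le_add_pow (x := fun _ => vstar) (fun _ => hfix.symm) hv
      (le_add_norm_sub vstar (v 0)) k
    have hw_ub := hT.le_fixedPoint_of_le_apply hdisc0 hdisc1 hfix (hvw k).1
    refine (pi_norm_le_iff_of_nonneg (by positivity)).2 fun j => ?_
    rw [Pi.sub_apply, Real.norm_of_nonneg (sub_nonneg.2 (hw_ub j))]
    linarith [hv_lb j, (hvw k).2 j]
  refine ⟨hrate, tendsto_iff_norm_sub_tendsto_zero.2 ?_⟩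
  refine squeeze_zero (fun _ => norm_nonneg _) (fun k => (norm_sub_rev _ _).trans_le (hrate k)) ?_
  simpa using (tendsto_pow_atTop_nhds_zero_of_lt_one hdisc0 hdisc1).mul_const ‖vstar - v 0‖

/-- Geometric rate of convergence of the accelerated iterates (Remark, part (iv)):
under the Acceleration Conditions, `‖v* − w^k‖_∞ ≤ α^k·‖v* − v⁰‖_∞` for every `k`
(the norm on `Fin n → ℝ` is the sup/max norm); in particular `w^k → v*`. -/
theorem accelerated_VI_geometric_rate (n : ℕ) (hn : 1 ≤ n)
    (disc : ℝ) (hdisc0 : 0 ≤ disc) (hdisc1 : disc < 1)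
    (A : Fin n → Finset ℕ) (hA : ∀ i, (A i).Nonempty)
    (r : Fin n → ℕ → ℝ) (p : Fin n → ℕ → Fin n → ℝ)
    (hp0 : ∀ i, ∀ a ∈ A i, ∀ j, 0 ≤ p i a j)
    (hp1 : ∀ i, ∀ a ∈ A i, ∑ j, p i a j = 1)
    (Z : (Fin n → ℝ) → (Fin n → ℝ))
    (hZA : ∀ v : Fin n → ℝ, (∀ i, v i ≤ Tdisc A hA r p disc v i) →
      ∀ i, Z v i ≤ Tdisc A hA r p disc (Z v) i)
    (hZB : ∀ v : Fin n → ℝ, (∀ i, v i ≤ Tdisc A hA r p disc v i) →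
      ∀ i, v i ≤ Z v i)
    (vstar : Fin n → ℝ) (hfix : Tdisc A hA r p disc vstar = vstar)
    (v w : ℕ → Fin n → ℝ)
    (h0 : v 0 = w 0) (h0V : ∀ i, v 0 i ≤ Tdisc A hA r p disc (v 0) i)
    (hv : ∀ k, v (k + 1) = Tdisc A hA r p disc (v k))
    (hw : ∀ k, w (k + 1) = Z (Tdisc A hA r p disc (w k))) :
    (∀ k, ‖vstar - w k‖ ≤ disc ^ k * ‖vstar - v 0‖) ∧
      Filter.Tendsto w Filter.atTop (nhds vstar) :=
  accelerated_VI_geometric_rate_general n disc hdisc0 hdisc1 A hA r p hp0 hp1 Z hZA hZB vstar hfix v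
    w h0 h0V hv hw
end

section
/- (Domination by the fixed point of the SSP operator and norm improvement, Lemma on convergence, parts (ii)–(iii)) Assume there exist weights ξ(i) > 0 for each state i and a constant ρ with 0 ≤ ρ < 1 such that Σ_j p(i,a,j)·ξ(j) ≤ ρ·ξ(i) for all i and all a ∈ A(i) (so that T_λ is a contraction in the ξ-weighted max norm). Suppose h_λ ∈ ℝ^n satisfies T_λ h_λ = h_λ. Let Z : ℝ^n → ℝ^n satisfy (A) Z(H_λ) ⊆ H_λ and (B) Z h ≥ h componentwise for all h ∈ H_λ. Then for every h ∈ H_λ: h ≤ Z h ≤ h_λ componentwise, and consequently max_i |h_λ(i) − (Z h)(i)|/ξ(i) ≤ max_i |h_λ(i) − h(i)|/ξ(i). -/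
/-!
A subsolution `g ≤ T_λ g` lies below the fixed point `h_λ`: at a state where `(g - h_λ)/ξ`
attains its maximum `M > 0`, the ξ-weighted contraction gives
`g - h_λ ≤ T_λ g - T_λ h_λ ≤ ρ M ξ < M ξ = g - h_λ`. Hence `Z h`, again a subsolution, satisfies
`h ≤ Z h ≤ h_λ`, and moving `h` towards `h_λ` can only shrink every weighted distance.
-/

open Finset

theorem le_of_le_map_of_map_eq {ι : Type*} [Finite ι] {T : (ι → ℝ) → ι → ℝ}
    {ξ : ι → ℝ} {ρ : ℝ} (hξ : ∀ i, 0 < ξ i) (hρ : ρ < 1)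
    (hT : ∀ (g f : ι → ℝ) (M : ℝ), 0 ≤ M → (∀ j, g j - f j ≤ M * ξ j) →
      ∀ i, T g i - T f i ≤ ρ * (M * ξ i))
    {g f : ι → ℝ} (hg : g ≤ T g) (hf : T f = f) : g ≤ f := by
  intro i
  by_contra! hfg
  have : Nonempty ι := ⟨i⟩
  obtain ⟨i₀, hi₀⟩ := Finite.exists_max fun j => (g j - f j) / ξ j
  set M := (g i₀ - f i₀) / ξ i₀
  have hM : 0 < M := lt_of_lt_of_le (div_pos (sub_pos.2 hfg) (hξ i)) (hi₀ i)
  have hgf : ∀ j, g j - f j ≤ M * ξ j := fun j => (div_le_iff₀ (hξ j)).1 (hi₀ j)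
  have hMξ : M * ξ i₀ = g i₀ - f i₀ := div_mul_cancel₀ _ (hξ i₀).ne'
  have hstep : g i₀ - f i₀ ≤ ρ * (M * ξ i₀) := by
    calc g i₀ - f i₀ ≤ T g i₀ - T f i₀ := by rw [hf]; exact sub_le_sub_right (hg i₀) _
      _ ≤ ρ * (M * ξ i₀) := hT g f M hM.le hgf i₀
  nlinarith [mul_pos hM (hξ i₀)]

section Tlam

variable {n : ℕ} {A : Fin n → Finset ℕ} {hA : ∀ i, (A i).Nonempty}
  {r : Fin n → ℕ → ℝ} {p : Fin n → ℕ → Fin n → ℝ} {lam : ℝ}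

theorem exists_Tlam_sub_Tlam_le (g f : Fin n → ℝ) (i : Fin n) :
    ∃ a ∈ A i, Tlam A hA r p lam g i - Tlam A hA r p lam f i ≤ ∑ j, p i a j * (g j - f j) := by
  obtain ⟨a, ha, hfa⟩ := exists_mem_eq_inf' (hA i) fun a => r i a - lam + ∑ j, p i a j * f j
  refine ⟨a, ha, ?_⟩
  have hga : Tlam A hA r p lam g i ≤ r i a - lam + ∑ j, p i a j * g j := inf'_le _ ha
  have hfa' : Tlam A hA r p lam f i = r i a - lam + ∑ j, p i a j * f j := hfa
  simp only [mul_sub, sum_sub_distrib]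
  linarith

theorem Tlam_sub_Tlam_le_of_sub_le {ξ : Fin n → ℝ} {ρ : ℝ}
    (hp0 : ∀ i, ∀ a ∈ A i, ∀ j, 0 ≤ p i a j)
    (hcontr : ∀ i, ∀ a ∈ A i, ∑ j, p i a j * ξ j ≤ ρ * ξ i)
    {g f : Fin n → ℝ} {M : ℝ} (hM : 0 ≤ M) (hgf : ∀ j, g j - f j ≤ M * ξ j) (i : Fin n) :
    Tlam A hA r p lam g i - Tlam A hA r p lam f i ≤ ρ * (M * ξ i) := by
  obtain ⟨a, ha, hTa⟩ := exists_Tlam_sub_Tlam_le (A := A) (hA := hA) (r := r) (lam := lam) g f i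
  calc Tlam A hA r p lam g i - Tlam A hA r p lam f i ≤ ∑ j, p i a j * (g j - f j) := hTa
    _ ≤ ∑ j, p i a j * (M * ξ j) :=
        sum_le_sum fun j _ => mul_le_mul_of_nonneg_left (hgf j) (hp0 i a ha j)
    _ = M * ∑ j, p i a j * ξ j := by rw [mul_sum]; exact sum_congr rfl fun j _ => by ring
    _ ≤ M * (ρ * ξ i) := mul_le_mul_of_nonneg_left (hcontr i a ha) hM
    _ = ρ * (M * ξ i) := by ring

end Tlam

theorem accelerated_SSP_domination_and_norm_general (n : ℕ) (hn : 1 ≤ n)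
    (A : Fin n → Finset ℕ) (hA : ∀ i, (A i).Nonempty)
    (r : Fin n → ℕ → ℝ) (p : Fin n → ℕ → Fin n → ℝ)
    (hp0 : ∀ i, ∀ a ∈ A i, ∀ j, 0 ≤ p i a j)
    (lam : ℝ)
    (ξ : Fin n → ℝ) (hξ : ∀ i, 0 < ξ i)
    (ρ : ℝ) (hρ1 : ρ < 1)
    (hcontr : ∀ i, ∀ a ∈ A i, ∑ j, p i a j * ξ j ≤ ρ * ξ i)
    (hlamfix : Fin n → ℝ) (hfix : Tlam A hA r p lam hlamfix = hlamfix)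
    (Z : (Fin n → ℝ) → (Fin n → ℝ))
    (hZA : ∀ h : Fin n → ℝ, (∀ i, h i ≤ Tlam A hA r p lam h i) →
      ∀ i, Z h i ≤ Tlam A hA r p lam (Z h) i)
    (hZB : ∀ h : Fin n → ℝ, (∀ i, h i ≤ Tlam A hA r p lam h i) →
      ∀ i, h i ≤ Z h i)
    (h : Fin n → ℝ) (hh : ∀ i, h i ≤ Tlam A hA r p lam h i) :
    (∀ i, h i ≤ Z h i ∧ Z h i ≤ hlamfix i) ∧
      (Finset.univ.sup' ⟨⟨0, hn⟩, Finset.mem_univ _⟩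
          (fun i => |hlamfix i - Z h i| / ξ i)
        ≤ Finset.univ.sup' ⟨⟨0, hn⟩, Finset.mem_univ _⟩
          (fun i => |hlamfix i - h i| / ξ i)) := by
  have hle : ∀ i, h i ≤ Z h i := hZB h hh
  have hge : Z h ≤ hlamfix :=
    le_of_le_map_of_map_eq hξ hρ1
      (fun _ _ _ hM hgf => Tlam_sub_Tlam_le_of_sub_le hp0 hcontr hM hgf) (hZA h hh) hfix
  refine ⟨fun i => ⟨hle i, hge i⟩, sup'_mono_fun fun i _ => ?_⟩
  exact div_le_div_of_nonneg_right
    (Set.abs_sub_right_of_mem_uIcc (Set.mem_uIcc_of_le (hle i) (hge i))) (hξ i).le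

/-- Domination by the fixed point of the SSP operator and improvement in the
ξ-weighted max norm (Lemma on convergence, parts (ii)–(iii)): assume weights
`ξ(i) > 0` and `0 ≤ ρ < 1` with `Σ_j p(i,a,j)·ξ(j) ≤ ρ·ξ(i)` (so `T_λ` is a
contraction in the ξ-weighted max norm), `T_λ h_λ = h_λ`, and `Z` satisfies the
Acceleration Conditions (A) and (B) on `H_λ`. Then every `h ∈ H_λ` satisfies
`h ≤ Z h ≤ h_λ` componentwise, and
`max_i |h_λ(i) − (Z h)(i)|/ξ(i) ≤ max_i |h_λ(i) − h(i)|/ξ(i)`. -/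
theorem accelerated_SSP_domination_and_norm (n : ℕ) (hn : 1 ≤ n)
    (A : Fin n → Finset ℕ) (hA : ∀ i, (A i).Nonempty)
    (r : Fin n → ℕ → ℝ) (p : Fin n → ℕ → Fin n → ℝ)
    (hp0 : ∀ i, ∀ a ∈ A i, ∀ j, 0 ≤ p i a j)
    (hp1 : ∀ i, ∀ a ∈ A i, ∑ j, p i a j ≤ 1)
    (lam : ℝ)
    (ξ : Fin n → ℝ) (hξ : ∀ i, 0 < ξ i)
    (ρ : ℝ) (hρ0 : 0 ≤ ρ) (hρ1 : ρ < 1)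
    (hcontr : ∀ i, ∀ a ∈ A i, ∑ j, p i a j * ξ j ≤ ρ * ξ i)
    (hlamfix : Fin n → ℝ) (hfix : Tlam A hA r p lam hlamfix = hlamfix)
    (Z : (Fin n → ℝ) → (Fin n → ℝ))
    (hZA : ∀ h : Fin n → ℝ, (∀ i, h i ≤ Tlam A hA r p lam h i) →
      ∀ i, Z h i ≤ Tlam A hA r p lam (Z h) i)
    (hZB : ∀ h : Fin n → ℝ, (∀ i, h i ≤ Tlam A hA r p lam h i) →
      ∀ i, h i ≤ Z h i)
    (h : Fin n → ℝ) (hh : ∀ i, h i ≤ Tlam A hA r p lam h i) :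
    (∀ i, h i ≤ Z h i ∧ Z h i ≤ hlamfix i) ∧
      (Finset.univ.sup' ⟨⟨0, hn⟩, Finset.mem_univ _⟩
          (fun i => |hlamfix i - Z h i| / ξ i)
        ≤ Finset.univ.sup' ⟨⟨0, hn⟩, Finset.mem_univ _⟩
          (fun i => |hlamfix i - h i| / ξ i)) :=
  accelerated_SSP_domination_and_norm_general n hn A hA r p hp0 lam ξ hξ ρ hρ1 hcontr hlamfix hfix Z
    hZA hZB h hh
end
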